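/- Let g_1,…,g_d be a C^{1+ε} Cantor system on [0,1] with scaling function S. Then there exists K ≥ 1 such that for all j ≠ j' in Σ_d^dual, (1/K) · ρ_S(j,j') ≤ |I_{j∩j'}| ≤ K · ρ_S(j,j'). -/

import Mathlib

open Set Filter

noncomputable section

/-- The unit interval `[0,1] ⊆ ℝ`. -/
abbrev I01 : Set ℝ := Set.Icc (0:ℝ) 1

/-- `ψ` satisfies an `ε`-Hölder bound with constant `H` on `[0,1]`. -/
def HolderBoundOn01 (ε H : ℝ) (ψ : ℝ → ℝ) : Prop :=
  ∀ x ∈ I01, ∀ y ∈ I01, |ψ x - ψ y| ≤ H * |x - y| ^ ε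

/-- A `C^{k+ε}` Cantor system on `[0,1]` with `d` branches: each branch `g i` is a
`C^k` increasing contraction of `[0,1]` with `ε`-Hölder `k`-th derivative, the images
`g i ([0,1])` are disjoint closed intervals in increasing order, `g 0 0 = 0` and
`g (d-1) 1 = 1`. -/
structure IsCantorSystem {d : ℕ} (k : ℕ) (ε : ℝ) (g : Fin d → ℝ → ℝ) : Prop where
  maps : ∀ i, Set.MapsTo (g i) I01 I01
  smooth : ∀ i, ContDiffOn ℝ k (g i) I01
  holder : ∀ i, ∃ H > 0, HolderBoundOn01 ε H (iteratedDerivWithin k (g i) I01)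
  deriv_pos : ∀ i, ∀ x ∈ I01, 0 < derivWithin (g i) I01 x
  deriv_lt_one : ∀ i, ∀ x ∈ I01, derivWithin (g i) I01 x < 1
  ordered : ∀ i j : Fin d, i < j → g i 1 < g j 0
  first : ∀ i : Fin d, (i : ℕ) = 0 → g i 0 = 0
  last : ∀ i : Fin d, (i : ℕ) = d - 1 → g i 1 = 1

/-- For a finite word `w = [w₁,…,wₙ]`, `wordMap g w = g_{wₙ} ∘ ⋯ ∘ g_{w₁}` (i.e. `G_w`). -/
def wordMap {d : ℕ} (g : Fin d → ℝ → ℝ) : List (Fin d) → ℝ → ℝ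
  | [] => id
  | i :: w => fun x => wordMap g w (g i x)

/-- `|I_w|`, the length of the interval `I_w = G_w([0,1]) = [G_w 0, G_w 1]`. -/
def wordLen {d : ℕ} (g : Fin d → ℝ → ℝ) (w : List (Fin d)) : ℝ :=
  wordMap g w 1 - wordMap g w 0

/-- The scaling data of the word `w`: the first `d` coordinates are the ratios
`|I_{i·w}|/|I_w|`, the last `d-1` coordinates are the `d-1` gap lengths between the
consecutive children `I_{1·w},…,I_{d·w}` divided by `|I_w|`. -/
def scalingData {d : ℕ} (g : Fin d → ℝ → ℝ) (w : List (Fin d)) : Fin (2*d-1) → ℝ :=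
  fun m =>
    if h : (m : ℕ) < d then
      wordLen g ((⟨(m : ℕ), h⟩ : Fin d) :: w) / wordLen g w
    else
      (wordMap g w (g ⟨(m : ℕ) - d + 1, by have := m.isLt; omega⟩ 0)
        - wordMap g w (g ⟨(m : ℕ) - d, by have := m.isLt; omega⟩ 1)) / wordLen g w

/-- The open simplex `Simp_{2d-2} ⊆ (0,1)^{2d-1}` of vectors with coordinate sum `1`. -/
def Simp (d : ℕ) : Set (Fin (2*d-1) → ℝ) :=
  {s | (∀ m, s m ∈ Set.Ioo (0:ℝ) 1) ∧ ∑ m, s m = 1}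

/-- The initial word `j|_n = (j_1,…,j_n)` of a sequence `j ∈ Σ_d^dual = {1,…,d}^ℕ`. -/
def dword {d : ℕ} (j : ℕ → Fin d) (n : ℕ) : List (Fin d) :=
  List.ofFn (fun i : Fin n => j i)

/-- `S` is the scaling function of the system `g`:
`S(j) = lim_{n→∞} S_n(j|_n)` for every `j ∈ Σ_d^dual`. -/
def HasScalingFunction {d : ℕ} (g : Fin d → ℝ → ℝ) (S : (ℕ → Fin d) → Fin (2*d-1) → ℝ) : Prop :=
  ∀ j : ℕ → Fin d,
    Filter.Tendsto (fun n => scalingData g (dword j n)) Filter.atTop (nhds (S j))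

/-- `ρ_S(j,j')` where `n = #(j∩j')`:
`ρ_S(j,j') = sup_w ∏_{t=1}^{n} S((j_{t+1},…,j_n)·w)_{j_t}` (depends only on `j` and `n`). -/
def rhoS {d : ℕ} (S : (ℕ → Fin d) → Fin (2*d-1) → ℝ) (j : ℕ → Fin d) (n : ℕ) : ℝ :=
  ⨆ w : ℕ → Fin d, ∏ t ∈ Finset.range n,
    S (fun m => if t + 1 + m < n then j (t + 1 + m) else w (t + 1 + m - n))
      ⟨((j t) : ℕ), by have := (j t).isLt; omega⟩

/-- Given a scaling vector `s ∈ Simp_{2d-2}`, the partition of `[0,1]` it determines has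
`i`-th child interval starting at `childLeft s i = ∑_{m<i} (s_m + s_{d+m})`. -/
def childLeft {d : ℕ} (s : Fin (2*d-1) → ℝ) (i : Fin d) : ℝ :=
  ∑ m ∈ (Finset.range (i : ℕ)).attach,
    (s ⟨(m : ℕ), by have h := Finset.mem_range.mp m.2; have := i.isLt; omega⟩
      + s ⟨d + (m : ℕ), by have h := Finset.mem_range.mp m.2; have := i.isLt; omega⟩)

/-- The right endpoint of the `i`-th child interval of the partition determined by `s`. -/
def childRight {d : ℕ} (s : Fin (2*d-1) → ℝ) (i : Fin d) : ℝ :=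
  childLeft s i + s ⟨(i : ℕ), by have := i.isLt; omega⟩

/-- `A(j)`: the set of `2d` endpoints of the `d` child intervals of the partition of `[0,1]`
determined by the scaling vector `s = S(j)`. -/
def Apts {d : ℕ} (s : Fin (2*d-1) → ℝ) : Set ℝ :=
  ⋃ i : Fin d, {childLeft s i, childRight s i}

/-- An increasing `C^k` diffeomorphism of `[0,1]`. -/
structure IsDiffeo01 (k : ℕ) (φ : ℝ → ℝ) : Prop where
  smooth : ContDiffOn ℝ k φ I01
  mono : StrictMonoOn φ I01
  deriv_pos : ∀ x ∈ I01, 0 < derivWithin φ I01 x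
  bij : Set.BijOn φ I01 I01

/-- `D^k(A₁,A₂)`: increasing `C^k` diffeomorphisms of `[0,1]` mapping `A₁` onto `A₂`. -/
def Dk (k : ℕ) (A₁ A₂ : Set ℝ) : Set (ℝ → ℝ) :=
  {φ | IsDiffeo01 k φ ∧ φ '' A₁ = A₂}

/-- `D^k_var(M)(A₁,A₂)`: members of `D^k(A₁,A₂)` whose `k`-th derivative has variation `< M`. -/
def DkVar (k : ℕ) (M : ℝ) (A₁ A₂ : Set ℝ) : Set (ℝ → ℝ) :=
  {φ | φ ∈ Dk k A₁ A₂ ∧ ∀ x ∈ I01, ∀ y ∈ I01,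
    |iteratedDerivWithin k φ I01 x - iteratedDerivWithin k φ I01 y| < M}

/-- The renormalization `(L')⁻¹ ∘ φ ∘ L` of `φ`, where `L, L'` are the increasing affine
bijections from `[0,1]` onto `[a,b]` and `[a',b']` respectively. -/
def renorm (a b a' b' : ℝ) (φ : ℝ → ℝ) : ℝ → ℝ :=
  fun x => (φ (a + (b - a) * x) - a') / (b' - a')

/-- `R_{j₀} φ`: restrict `φ` to the `j₀`-th child interval of the partition determined by `s`
(mapped to the `j₀`-th child interval of the partition determined by `s'`) and renormalize. -/
def Rmap {d : ℕ} (s s' : Fin (2*d-1) → ℝ) (j₀ : Fin d) (φ : ℝ → ℝ) : ℝ → ℝ :=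
  renorm (childLeft s j₀) (childRight s j₀) (childLeft s' j₀) (childRight s' j₀) φ

/-- `j₀·j = (j₀, j_1, j_2, …)`. -/
def consSeq {d : ℕ} (j₀ : Fin d) (j : ℕ → Fin d) : ℕ → Fin d :=
  fun m => if m = 0 then j₀ else j (m - 1)

/-- The Cantor set of the system: `C = ⋂_{n ≥ 1} ⋃_{w of length n} I_w`. -/
def systemCantorSet {d : ℕ} (g : Fin d → ℝ → ℝ) : Set ℝ :=
  ⋂ n : ℕ, ⋃ w ∈ {w : List (Fin d) | w.length = n + 1}, wordMap g w '' I01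

end

/-! Bounded distortion. Branches with Hölder derivatives in `[lo, hi] ⊆ (0, 1)` distort length
ratios inside a window `J` by a factor at most `exp (C |J| ^ ε)`; along a composition the
windows shrink geometrically, so every word map `G_v` does so with one constant `D`. Hence the
child ratio `|I_{i·u}| / |I_u|` and, in the limit, the scaling coordinate `S(σ)_i` of any `σ`
beginning with `u` agree up to `exp (D (hi ^ ε) ^ |u|)`. Since `|I_{j|p}|` is the telescoping
product of the child ratios of its suffixes, these factors multiply to at most
`exp (D / (1 - hi ^ ε))`, uniformly in `p` and in the tail over which `ρ_S` is a supremum. -/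

open Real

def Comparable (K x y : ℝ) : Prop := x ≤ K * y ∧ y ≤ K * x

namespace Comparable

variable {K K' x y z : ℝ}

lemma refl (hK : 1 ≤ K) (hx : 0 ≤ x) : Comparable K x x :=
  ⟨le_mul_of_one_le_left hx hK, le_mul_of_one_le_left hx hK⟩

lemma nonneg_left (h : Comparable K x y) (hK : 0 < K) (hy : 0 ≤ y) : 0 ≤ x :=
  (mul_nonneg_iff_of_pos_left hK).1 (hy.trans h.2)

lemma trans (h : Comparable K x y) (h' : Comparable K' y z) (hK : 0 ≤ K) (hK' : 0 ≤ K') :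
    Comparable (K * K') x z :=
  ⟨h.1.trans (by rw [mul_assoc]; exact mul_le_mul_of_nonneg_left h'.1 hK),
    h'.2.trans (by rw [mul_comm K, mul_assoc]; exact mul_le_mul_of_nonneg_left h.2 hK')⟩

lemma mono (h : Comparable K x y) (hKK' : K ≤ K') (hx : 0 ≤ x) (hy : 0 ≤ y) :
    Comparable K' x y :=
  ⟨h.1.trans (mul_le_mul_of_nonneg_right hKK' hy), h.2.trans (mul_le_mul_of_nonneg_right hKK' hx)⟩

lemma mul_right (h : Comparable K x y) (hz : 0 ≤ z) : Comparable K (x * z) (y * z) :=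
  ⟨by rw [← mul_assoc]; exact mul_le_mul_of_nonneg_right h.1 hz,
    by rw [← mul_assoc]; exact mul_le_mul_of_nonneg_right h.2 hz⟩

lemma prod {ι : Type*} {s : Finset ι} {K x y : ι → ℝ}
    (h : ∀ i ∈ s, Comparable (K i) (x i) (y i)) (hx : ∀ i ∈ s, 0 ≤ x i)
    (hy : ∀ i ∈ s, 0 ≤ y i) :
    Comparable (∏ i ∈ s, K i) (∏ i ∈ s, x i) (∏ i ∈ s, y i) := by
  constructor <;> rw [← Finset.prod_mul_distrib]
  · exact Finset.prod_le_prod hx fun i hi => (h i hi).1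
  · exact Finset.prod_le_prod hy fun i hi => (h i hi).2

lemma of_tendsto {α : Type*} {l : Filter α} [l.NeBot] {f : α → ℝ}
    (hf : Tendsto f l (nhds x)) (h : ∀ᶠ a in l, Comparable K (f a) y) :
    Comparable K x y :=
  ⟨le_of_tendsto hf (h.mono fun _ ha => ha.1),
    ge_of_tendsto (hf.const_mul K) (h.mono fun _ ha => ha.2)⟩

lemma ciSup {ι : Sort*} [Nonempty ι] {f : ι → ℝ} (h : ∀ i, Comparable K (f i) y) (hK : 0 ≤ K) :
    Comparable K (⨆ i, f i) y := by
  refine ⟨ciSup_le fun i => (h i).1, ?_⟩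
  obtain ⟨i⟩ := ‹Nonempty ι›
  exact (h i).2.trans
    (mul_le_mul_of_nonneg_left (le_ciSup ⟨K * y, by rintro _ ⟨i, rfl⟩; exact (h i).1⟩ i) hK)

lemma one_div_mul_le (h : Comparable K x y) (hK : 0 < K) : 1 / K * x ≤ y := by
  rw [one_div_mul_eq_div, div_le_iff₀' hK]
  exact h.1

end Comparable

structure BoundedDistortion (ε hi C : ℝ) (φ : ℝ → ℝ) : Prop where
  mapsTo : MapsTo φ I01 I01
  strictMonoOn : StrictMonoOn φ I01
  sub_le_mul : ∀ a ∈ I01, ∀ b ∈ I01, a ≤ b → φ b - φ a ≤ hi * (b - a)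
  comparable : ∀ ⦃c a b e : ℝ⦄, 0 ≤ c → c ≤ a → a ≤ b → b ≤ e → e ≤ 1 →
    Comparable (exp (C * (e - c) ^ ε)) ((φ b - φ a) / (φ e - φ c)) ((b - a) / (e - c))

lemma div_sub_nonneg_of_monotoneOn {φ : ℝ → ℝ} (hmono : MonotoneOn φ I01) {c a b e : ℝ}
    (hc : 0 ≤ c) (hca : c ≤ a) (hab : a ≤ b) (hbe : b ≤ e) (he : e ≤ 1) :
    0 ≤ (φ b - φ a) / (φ e - φ c) := by
  have ha : a ∈ I01 := ⟨hc.trans hca, (hab.trans hbe).trans he⟩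
  have hb : b ∈ I01 := ⟨ha.1.trans hab, hbe.trans he⟩
  exact div_nonneg (sub_nonneg.2 (hmono ha hb hab))
    (sub_nonneg.2 (hmono ⟨hc, by linarith⟩ ⟨by linarith, he⟩ (by linarith)))

namespace BoundedDistortion

variable {ε hi hi' C C' : ℝ} {φ ψ : ℝ → ℝ}

lemma hi_pos (h : BoundedDistortion ε hi C φ) : 0 < hi := by
  have h01 := h.strictMonoOn (left_mem_Icc.2 zero_le_one) (right_mem_Icc.2 zero_le_one) one_pos
  have := h.sub_le_mul 0 (left_mem_Icc.2 zero_le_one) 1 (right_mem_Icc.2 zero_le_one) zero_le_one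
  linarith

protected lemma id (hC : 0 ≤ C) : BoundedDistortion ε 1 C id where
  mapsTo := mapsTo_id _
  strictMonoOn := strictMono_id.strictMonoOn _
  sub_le_mul _ _ _ _ _ := by simp
  comparable c a b e _ hca hab hbe _ :=
    Comparable.refl (one_le_exp (mul_nonneg hC (rpow_nonneg (by linarith) _)))
      (div_nonneg (sub_nonneg.2 hab) (sub_nonneg.2 (hca.trans (hab.trans hbe))))

lemma mono (h : BoundedDistortion ε hi C φ) (hhi : hi ≤ hi') (hC : C ≤ C') :
    BoundedDistortion ε hi' C' φ where
  mapsTo := h.mapsTo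
  strictMonoOn := h.strictMonoOn
  sub_le_mul a ha b hb hab :=
    (h.sub_le_mul a ha b hb hab).trans (mul_le_mul_of_nonneg_right hhi (sub_nonneg.2 hab))
  comparable c a b e hc hca hab hbe he :=
    (h.comparable hc hca hab hbe he).mono
      (exp_le_exp.2 (mul_le_mul_of_nonneg_right hC (rpow_nonneg (by linarith) _)))
      (div_sub_nonneg_of_monotoneOn h.strictMonoOn.monotoneOn hc hca hab hbe he)
      (div_nonneg (by linarith) (by linarith))

/-- The distortion of `ψ` is measured on the window `φ '' [c, e]`, of length at most
`hi₁ * (e - c)`. -/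
lemma comp {hi₁ hi₂ C₁ C₂ : ℝ} (hψ : BoundedDistortion ε hi₂ C₂ ψ)
    (hφ : BoundedDistortion ε hi₁ C₁ φ) (hε : 0 ≤ ε) (hC₂ : 0 ≤ C₂) :
    BoundedDistortion ε (hi₂ * hi₁) (C₂ * hi₁ ^ ε + C₁) (ψ ∘ φ) where
  mapsTo := hψ.mapsTo.comp hφ.mapsTo
  strictMonoOn := hψ.strictMonoOn.comp hφ.strictMonoOn hφ.mapsTo
  sub_le_mul a ha b hb hab := by
    have hφab := hφ.strictMonoOn.monotoneOn ha hb hab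
    calc ψ (φ b) - ψ (φ a) ≤ hi₂ * (φ b - φ a) :=
          hψ.sub_le_mul _ (hφ.mapsTo ha) _ (hφ.mapsTo hb) hφab
      _ ≤ hi₂ * (hi₁ * (b - a)) :=
          mul_le_mul_of_nonneg_left (hφ.sub_le_mul a ha b hb hab) hψ.hi_pos.le
      _ = hi₂ * hi₁ * (b - a) := by ring
  comparable c a b e hc hca hab hbe he := by
    have hcI : c ∈ I01 := ⟨hc, by linarith⟩
    have haI : a ∈ I01 := ⟨by linarith, by linarith⟩
    have hbI : b ∈ I01 := ⟨by linarith, by linarith⟩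
    have heI : e ∈ I01 := ⟨by linarith, he⟩
    have hmono := hφ.strictMonoOn.monotoneOn
    have hψ' := hψ.comparable (hφ.mapsTo hcI).1 (hmono hcI haI hca) (hmono haI hbI hab)
      (hmono hbI heI hbe) (hφ.mapsTo heI).2
    have hwindow : (φ e - φ c) ^ ε ≤ hi₁ ^ ε * (e - c) ^ ε := by
      rw [← mul_rpow hφ.hi_pos.le (by linarith)]
      exact rpow_le_rpow (sub_nonneg.2 (hmono hcI heI (by linarith)))
        (hφ.sub_le_mul c hcI e heI (by linarith)) hε
    refine (hψ'.trans (hφ.comparable hc hca hab hbe he) (exp_pos _).le (exp_pos _).le).mono ?_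
      (div_sub_nonneg_of_monotoneOn
        (hψ.strictMonoOn.comp hφ.strictMonoOn hφ.mapsTo).monotoneOn hc hca hab hbe he)
      (div_nonneg (by linarith) (by linarith))
    rw [← exp_add]
    refine exp_le_exp.2 ?_
    nlinarith [mul_le_mul_of_nonneg_left hwindow hC₂]

end BoundedDistortion

lemma exists_sub_eq_derivWithin_mul {φ : ℝ → ℝ} (hφ : ContDiffOn ℝ 1 φ I01) {a b : ℝ}
    (ha : 0 ≤ a) (hab : a < b) (hb : b ≤ 1) :
    ∃ ξ ∈ Ioo a b, φ b - φ a = derivWithin φ I01 ξ * (b - a) := by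
  have hderiv : ∀ x ∈ Ioo a b, HasDerivAt φ (derivWithin φ I01 x) x := by
    intro x hx
    have hxI : I01 ∈ nhds x := Icc_mem_nhds (by linarith [hx.1]) (by linarith [hx.2])
    rw [derivWithin_of_mem_nhds hxI]
    exact ((hφ.differentiableOn one_ne_zero).differentiableAt hxI).hasDerivAt
  obtain ⟨ξ, hξ, hslope⟩ := exists_hasDerivAt_eq_slope φ _ hab
    (hφ.continuousOn.mono (Icc_subset_Icc ha hb)) hderiv
  exact ⟨ξ, hξ, by rw [hslope, div_mul_cancel₀ _ (sub_ne_zero.2 hab.ne')]⟩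

lemma le_exp_div_mul_of_sub_le {u v lo δ : ℝ} (hlo : 0 < lo) (hv : lo ≤ v) (hδ : 0 ≤ δ)
    (h : u - v ≤ δ) : u ≤ exp (δ / lo) * v := by
  have hδv : δ ≤ v * (δ / lo) := by
    calc δ = lo * (δ / lo) := by field_simp
      _ ≤ v * (δ / lo) := mul_le_mul_of_nonneg_right hv (div_nonneg hδ hlo.le)
  calc u ≤ (δ / lo + 1) * v := by linarith
    _ ≤ exp (δ / lo) * v := mul_le_mul_of_nonneg_right (add_one_le_exp _) (by linarith)

lemma le_exp_mul_of_holderBoundOn01 {ψ : ℝ → ℝ} {ε lo H c e ξ η : ℝ}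
    (hH : HolderBoundOn01 ε H ψ) (hε : 0 ≤ ε) (hlo : 0 < lo) (hψ : ∀ x ∈ I01, lo ≤ ψ x)
    (hc : 0 ≤ c) (he : e ≤ 1) (hξ : ξ ∈ Icc c e) (hη : η ∈ Icc c e) :
    ψ ξ ≤ exp (H / lo * (e - c) ^ ε) * ψ η := by
  have hH0 : 0 ≤ H := by
    simpa using (abs_nonneg _).trans
      (hH 0 (left_mem_Icc.2 zero_le_one) 1 (right_mem_Icc.2 zero_le_one))
  have hξI : ξ ∈ I01 := ⟨hc.trans hξ.1, hξ.2.trans he⟩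
  have hηI : η ∈ I01 := ⟨hc.trans hη.1, hη.2.trans he⟩
  have hdist : |ξ - η| ^ ε ≤ (e - c) ^ ε :=
    rpow_le_rpow (abs_nonneg _) (abs_sub_le_iff.2 ⟨by linarith [hξ.2, hη.1],
      by linarith [hξ.1, hη.2]⟩) hε
  rw [show H / lo * (e - c) ^ ε = H * (e - c) ^ ε / lo by ring]
  exact le_exp_div_mul_of_sub_le hlo (hψ η hηI)
    (mul_nonneg hH0 (rpow_nonneg (by linarith [hξ.1, hξ.2]) _))
    ((le_abs_self _).trans ((hH ξ hξI η hηI).trans (mul_le_mul_of_nonneg_left hdist hH0)))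

lemma boundedDistortion_of_derivWithin {φ : ℝ → ℝ} {ε lo hi H : ℝ} (hε : 0 ≤ ε)
    (hmaps : MapsTo φ I01 I01) (hφ : ContDiffOn ℝ 1 φ I01) (hlo : 0 < lo)
    (hbounds : ∀ x ∈ I01, lo ≤ derivWithin φ I01 x ∧ derivWithin φ I01 x ≤ hi)
    (hH : HolderBoundOn01 ε H (derivWithin φ I01)) :
    BoundedDistortion ε hi (H / lo) φ where
  mapsTo := hmaps
  strictMonoOn a ha b hb hab := by
    obtain ⟨ξ, hξ, heq⟩ := exists_sub_eq_derivWithin_mul hφ ha.1 hab hb.2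
    have := (hbounds ξ ⟨by linarith [ha.1, hξ.1], by linarith [hb.2, hξ.2]⟩).1
    nlinarith
  sub_le_mul a ha b hb hab := by
    rcases hab.eq_or_lt with rfl | hab
    · simp
    obtain ⟨ξ, hξ, heq⟩ := exists_sub_eq_derivWithin_mul hφ ha.1 hab hb.2
    rw [heq]
    exact mul_le_mul_of_nonneg_right
      (hbounds ξ ⟨by linarith [ha.1, hξ.1], by linarith [hb.2, hξ.2]⟩).2 (by linarith)
  comparable c a b e hc hca hab hbe he := by
    rcases hab.eq_or_lt with rfl | hab
    · simp [Comparable]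
    have hderiv_le : ∀ ξ ∈ Icc c e, ∀ η ∈ Icc c e,
        derivWithin φ I01 ξ ≤ exp (H / lo * (e - c) ^ ε) * derivWithin φ I01 η :=
      fun ξ hξ η hη => le_exp_mul_of_holderBoundOn01 hH hε hlo (fun x hx => (hbounds x hx).1)
        hc he hξ hη
    obtain ⟨ξ, hξ, hξeq⟩ := exists_sub_eq_derivWithin_mul hφ (hc.trans hca) hab (hbe.trans he)
    obtain ⟨η, hη, hηeq⟩ := exists_sub_eq_derivWithin_mul hφ hc (hca.trans_lt (hab.trans_le hbe))
      he
    have hξc : ξ ∈ Icc c e := ⟨by linarith [hξ.1], by linarith [hξ.2]⟩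
    have hηc : η ∈ Icc c e := ⟨hη.1.le, hη.2.le⟩
    have hpos : 0 < derivWithin φ I01 η :=
      hlo.trans_le (hbounds η ⟨hc.trans hηc.1, hηc.2.trans he⟩).1
    have hratio : Comparable (exp (H / lo * (e - c) ^ ε))
        (derivWithin φ I01 ξ / derivWithin φ I01 η) 1 := by
      constructor
      · rw [div_le_iff₀ hpos, mul_one]; exact hderiv_le ξ hξc η hηc
      · rw [mul_div_assoc', le_div_iff₀ hpos, one_mul]; exact hderiv_le η hηc ξ hξc
    rw [hξeq, hηeq, mul_div_mul_comm]
    simpa using hratio.mul_right (div_nonneg (by linarith) (by linarith))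

lemma IsCantorSystem.exists_boundedDistortion {d : ℕ} {ε : ℝ} {g : Fin d → ℝ → ℝ} (hε : 0 ≤ ε)
    (hg : IsCantorSystem 1 ε g) :
    ∃ hi C : ℝ, 0 ≤ hi ∧ hi < 1 ∧ 0 ≤ C ∧ ∀ i, BoundedDistortion ε hi C (g i) := by
  have hbranch : ∀ i, ∃ hi < 1, ∃ C, BoundedDistortion ε hi C (g i) := by
    intro i
    have hcont := (hg.smooth i).continuousOn_derivWithin (uniqueDiffOn_Icc zero_lt_one) le_rfl
    obtain ⟨xm, hxm, hmin⟩ := isCompact_Icc.exists_isMinOn (nonempty_Icc.2 zero_le_one) hcont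
    obtain ⟨xM, hxM, hmax⟩ := isCompact_Icc.exists_isMaxOn (nonempty_Icc.2 zero_le_one) hcont
    obtain ⟨H, -, hH⟩ := hg.holder i
    rw [iteratedDerivWithin_one] at hH
    exact ⟨_, hg.deriv_lt_one i xM hxM, _, boundedDistortion_of_derivWithin hε (hg.maps i)
      (hg.smooth i) (hg.deriv_pos i xm hxm) (fun x hx => ⟨hmin hx, hmax hx⟩) hH⟩
  choose hi hhi C hC using hbranch
  obtain ⟨h, hh, hh01⟩ := ((eventually_all.2 fun i =>
    mem_of_superset (Ioo_mem_nhdsLT (hhi i)) fun _ hx => hx.1.le).and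
      (Ioo_mem_nhdsLT zero_lt_one)).exists
  obtain ⟨c, hc, hc0⟩ := ((eventually_all.2 fun i => eventually_ge_atTop (C i)).and
    (eventually_ge_atTop 0)).exists
  exact ⟨h, c, hh01.1.le, hh01.2, hc0, fun i => (hC i).mono (hh i) (hc i)⟩


section Words

variable {d : ℕ} {g : Fin d → ℝ → ℝ} {ε hi C D : ℝ}

lemma wordMap_cons (g : Fin d → ℝ → ℝ) (i : Fin d) (w : List (Fin d)) :
    wordMap g (i :: w) = wordMap g w ∘ g i := rfl

lemma wordMap_append (g : Fin d → ℝ → ℝ) (u v : List (Fin d)) :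
    wordMap g (u ++ v) = wordMap g v ∘ wordMap g u := by
  induction u with
  | nil => rfl
  | cons i u ih => rw [List.cons_append, wordMap_cons, ih, wordMap_cons, Function.comp_assoc]

lemma boundedDistortion_wordMap (hε : 0 ≤ ε) (hr : hi ^ ε < 1) (hC : 0 ≤ C)
    (hg : ∀ i, BoundedDistortion ε hi C (g i)) (w : List (Fin d)) :
    BoundedDistortion ε (hi ^ w.length) (C / (1 - hi ^ ε)) (wordMap g w) := by
  have hD : 0 ≤ C / (1 - hi ^ ε) := div_nonneg hC (by linarith)
  induction w with
  | nil => rw [List.length_nil, pow_zero]; exact BoundedDistortion.id hD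
  | cons i w ih =>
    -- `C / (1 - hi ^ ε)` is the fixed point of `D ↦ D * hi ^ ε + C` produced by `comp`.
    rw [wordMap_cons, List.length_cons, pow_succ]
    refine (ih.comp (hg i) hε hD).mono le_rfl (le_of_eq ?_)
    have : 1 - hi ^ ε ≠ 0 := by linarith
    field_simp
    ring

lemma wordLen_pos {w : List (Fin d)} (h : BoundedDistortion ε hi C (wordMap g w)) :
    0 < wordLen g w :=
  sub_pos.2 (h.strictMonoOn (left_mem_Icc.2 zero_le_one) (right_mem_Icc.2 zero_le_one) one_pos)

lemma wordLen_le {w : List (Fin d)} (h : BoundedDistortion ε hi C (wordMap g w)) :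
    wordLen g w ≤ hi := by
  have := h.sub_le_mul 0 (left_mem_Icc.2 zero_le_one) 1 (right_mem_Icc.2 zero_le_one) zero_le_one
  rwa [sub_zero, mul_one] at this

/-- The child `I_{i·(u++v)}` sits in `I_{u++v}` as the image under `G_v` of the child `I_{i·u}`
sitting in `I_u`; so the two child ratios differ by the distortion of `G_v` on the window `I_u`. -/
lemma comparable_wordLen_cons_append (hG : ∀ w, BoundedDistortion ε (hi ^ w.length) D (wordMap g w))
    (i : Fin d) (u v : List (Fin d)) :
    Comparable (exp (D * wordLen g u ^ ε))
      (wordLen g (i :: (u ++ v)) / wordLen g (u ++ v)) (wordLen g (i :: u) / wordLen g u) := by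
  have h0 : (0 : ℝ) ∈ I01 := left_mem_Icc.2 zero_le_one
  have h1 : (1 : ℝ) ∈ I01 := right_mem_Icc.2 zero_le_one
  have hu := (hG u).strictMonoOn.monotoneOn
  have hgi : MapsTo (g i) I01 I01 := (hG [i]).mapsTo
  have hiu := (hG (i :: u)).strictMonoOn.monotoneOn h0 h1 zero_le_one
  have := (hG v).comparable ((hG u).mapsTo h0).1 (hu h0 (hgi h0) (hgi h0).1) hiu
    (hu (hgi h1) h1 (hgi h1).2) ((hG u).mapsTo h1).2
  simpa only [wordLen, wordMap_cons, wordMap_append, Function.comp_apply] using this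

end Words

section Sequences

variable {d : ℕ}

lemma dword_add (f : ℕ → Fin d) (q r : ℕ) :
    dword f (q + r) = dword f q ++ dword (fun m => f (q + m)) r := by
  simp only [dword, List.ofFn_add, Fin.val_castLE, Fin.val_natAdd]

lemma dword_congr {f f' : ℕ → Fin d} {n : ℕ} (h : ∀ m < n, f m = f' m) :
    dword f n = dword f' n := by
  simp only [dword, List.ofFn_inj]
  exact funext fun i => h i i.isLt

/-- The word `(j_t, …, j_{p-1})`. -/
def dsuffix (j : ℕ → Fin d) (p t : ℕ) : List (Fin d) := dword (fun m => j (t + m)) (p - t)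

lemma dsuffix_eq_cons (j : ℕ → Fin d) {p t : ℕ} (htp : t < p) :
    dsuffix j p t = j t :: dsuffix j p (t + 1) := by
  obtain ⟨k, rfl⟩ := Nat.exists_eq_add_of_lt htp
  simp only [dsuffix, dword, show t + k + 1 - t = k + 1 by omega,
    show t + k + 1 - (t + 1) = k by omega,
    List.ofFn_succ, Fin.val_cast, Fin.val_zero, add_zero, Fin.val_succ, List.cons.injEq,
    List.ofFn_inj, true_and]
  exact funext fun i => congrArg j (by omega)

end Sequences

section Scaling

variable {d : ℕ} {g : Fin d → ℝ → ℝ} {ε hi D : ℝ}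

lemma scalingData_of_lt (g : Fin d → ℝ → ℝ) (w : List (Fin d)) (i : Fin d)
    (h : (i : ℕ) < 2 * d - 1) :
    scalingData g w ⟨i, h⟩ = wordLen g (i :: w) / wordLen g w := by
  rw [scalingData, dif_pos i.isLt]

lemma wordLen_dword_eq_prod (hpos : ∀ w, 0 < wordLen g w) (j : ℕ → Fin d) (p : ℕ) :
    wordLen g (dword j p) =
      ∏ t ∈ Finset.range p, wordLen g (dsuffix j p t) / wordLen g (dsuffix j p (t + 1)) := by
  have hF : ∀ t, wordLen g (dsuffix j p t) ≠ 0 := fun t => (hpos _).ne'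
  rw [Finset.prod_range_induction _ (fun n => wordLen g (dsuffix j p 0) / wordLen g (dsuffix j p n))
    (div_self (hF 0)) p fun k _ => by field_simp [hF k, hF (k + 1)]]
  simp [dsuffix, dword, wordLen, wordMap]

/-- The limit defining `S σ` runs over words `dword σ n ++ v`, whose child ratios are all within
the distortion of `G_v` on the window `I_{dword σ n}`, of length at most `hi ^ n`. -/
lemma comparable_scalingFunction {S : (ℕ → Fin d) → Fin (2*d-1) → ℝ}
    (hS : HasScalingFunction g S) (hG : ∀ w, BoundedDistortion ε (hi ^ w.length) D (wordMap g w))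
    (hε : 0 ≤ ε) (hD : 0 ≤ D) (i : Fin d) (hid : (i : ℕ) < 2 * d - 1) (σ : ℕ → Fin d) (n : ℕ) :
    Comparable (exp (D * (hi ^ ε) ^ n)) (S σ ⟨i, hid⟩)
      (wordLen g (i :: dword σ n) / wordLen g (dword σ n)) := by
  have hhi : 0 ≤ hi := by simpa using (hG [i]).hi_pos.le
  have hlen : (dword σ n).length = n := List.length_ofFn
  refine Comparable.of_tendsto (tendsto_pi_nhds.1 (hS σ) ⟨i, hid⟩)
    (eventually_atTop.2 ⟨n, fun m hm => ?_⟩)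
  obtain ⟨k, rfl⟩ := Nat.exists_eq_add_of_le hm
  have hwin : wordLen g (dword σ n) ^ ε ≤ (hi ^ ε) ^ n := by
    rw [rpow_pow_comm hhi]
    have := wordLen_le (hG (dword σ n))
    rw [hlen] at this
    exact rpow_le_rpow (wordLen_pos (hG _)).le this hε
  rw [scalingData_of_lt, dword_add]
  exact (comparable_wordLen_cons_append hG i _ _).mono
    (exp_le_exp.2 (mul_le_mul_of_nonneg_left hwin hD))
    (div_nonneg (wordLen_pos (hG _)).le (wordLen_pos (hG _)).le)
    (div_nonneg (wordLen_pos (hG _)).le (wordLen_pos (hG _)).le)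

end Scaling

lemma prod_exp_mul_pow_sub_le {D r : ℝ} (hD : 0 ≤ D) (hr0 : 0 ≤ r) (hr1 : r < 1) (p : ℕ) :
    ∏ t ∈ Finset.range p, exp (D * r ^ (p - (t + 1))) ≤ exp (D / (1 - r)) := by
  rw [← exp_sum, exp_le_exp, ← Finset.mul_sum, div_eq_mul_one_div D]
  refine mul_le_mul_of_nonneg_left ?_ hD
  calc ∑ t ∈ Finset.range p, r ^ (p - (t + 1))
      = ∑ t ∈ Finset.range p, r ^ t := by
        rw [← Finset.sum_range_reflect (r ^ ·) p]
        exact Finset.sum_congr rfl fun t _ => by rw [Nat.sub_sub, add_comm 1]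
    _ ≤ 1 / (1 - r) := by
        have := geom_sum_Ico_le_of_lt_one (m := 0) (n := p) hr0 hr1
        rwa [← Finset.range_eq_Ico, pow_zero] at this

lemma comparable_rhoS_wordLen {d : ℕ} {g : Fin d → ℝ → ℝ} {ε hi D : ℝ}
    {S : (ℕ → Fin d) → Fin (2*d-1) → ℝ} (hS : HasScalingFunction g S)
    (hG : ∀ w, BoundedDistortion ε (hi ^ w.length) D (wordMap g w))
    (hε : 0 ≤ ε) (hD : 0 ≤ D) (hr0 : 0 ≤ hi ^ ε) (hr1 : hi ^ ε < 1) (j : ℕ → Fin d) (p : ℕ) :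
    Comparable (exp (D / (1 - hi ^ ε))) (rhoS S j p) (wordLen g (dword j p)) := by
  have : Nonempty (ℕ → Fin d) := ⟨j⟩
  refine Comparable.ciSup (fun w => ?_) (exp_pos _).le
  rw [wordLen_dword_eq_prod (fun w => wordLen_pos (hG w))]
  have hratio : ∀ t ∈ Finset.range p,
      0 ≤ wordLen g (dsuffix j p t) / wordLen g (dsuffix j p (t + 1)) :=
    fun t _ => div_nonneg (wordLen_pos (hG _)).le (wordLen_pos (hG _)).le
  have hterm : ∀ t ∈ Finset.range p, Comparable (exp (D * (hi ^ ε) ^ (p - (t + 1))))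
      (S (fun m => if t + 1 + m < p then j (t + 1 + m) else w (t + 1 + m - p))
        ⟨j t, by have := (j t).isLt; omega⟩)
      (wordLen g (dsuffix j p t) / wordLen g (dsuffix j p (t + 1))) := by
    intro t ht
    set σ : ℕ → Fin d := fun m => if t + 1 + m < p then j (t + 1 + m) else w (t + 1 + m - p)
    have hσ : dword σ (p - (t + 1)) = dsuffix j p (t + 1) :=
      dword_congr fun m hm => if_pos (by omega)
    rw [dsuffix_eq_cons j (Finset.mem_range.1 ht), ← hσ]
    exact comparable_scalingFunction hS hG hε hD _ _ σ _
  have hS_nonneg : ∀ t ∈ Finset.range p, 0 ≤ S _ _ :=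
    fun t ht => (hterm t ht).nonneg_left (exp_pos _) (hratio t ht)
  exact (Comparable.prod hterm hS_nonneg hratio).mono (prod_exp_mul_pow_sub_le hD hr0 hr1 p)
    (Finset.prod_nonneg hS_nonneg) (Finset.prod_nonneg hratio)

theorem stmt7_general (d : ℕ) (ε : ℝ) (hε : ε ∈ Set.Ioc (0:ℝ) 1)
    (g : Fin d → ℝ → ℝ) (hg : IsCantorSystem 1 ε g)
    (S : (ℕ → Fin d) → Fin (2*d-1) → ℝ) (hS : HasScalingFunction g S) :
    ∃ K : ℝ, 1 ≤ K ∧ ∀ j j' : ℕ → Fin d, ∀ p : ℕ,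
      (∀ t < p, j t = j' t) → j p ≠ j' p →
      (1 / K) * rhoS S j p ≤ wordLen g (dword j p) ∧
        wordLen g (dword j p) ≤ K * rhoS S j p := by
  obtain ⟨hi, C, hhi0, hhi1, hC, hbranch⟩ := hg.exists_boundedDistortion hε.1.le
  have hr0 : 0 ≤ hi ^ ε := rpow_nonneg hhi0 ε
  have hr1 : hi ^ ε < 1 := rpow_lt_one hhi0 hhi1 hε.1
  have hD : 0 ≤ C / (1 - hi ^ ε) := div_nonneg hC (by linarith)
  have hG := boundedDistortion_wordMap hε.1.le hr1 hC hbranch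
  refine ⟨exp (C / (1 - hi ^ ε) / (1 - hi ^ ε)), one_le_exp (div_nonneg hD (by linarith)),
    fun j _ p _ _ => ?_⟩
  have h := comparable_rhoS_wordLen hS hG hε.1.le hD hr0 hr1 j p
  exact ⟨h.one_div_mul_le (exp_pos _), h.2⟩

/-- for a `C^{1+ε}` Cantor system with scaling function `S`, the length
`|I_{j∩j'}|` is uniformly comparable to `ρ_S(j,j')`. -/
theorem stmt7 (d : ℕ) (hd : 2 ≤ d) (ε : ℝ) (hε : ε ∈ Set.Ioc (0:ℝ) 1)
    (g : Fin d → ℝ → ℝ) (hg : IsCantorSystem 1 ε g)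
    (S : (ℕ → Fin d) → Fin (2*d-1) → ℝ) (hS : HasScalingFunction g S) :
    ∃ K : ℝ, 1 ≤ K ∧ ∀ j j' : ℕ → Fin d, ∀ p : ℕ,
      (∀ t < p, j t = j' t) → j p ≠ j' p →
      (1 / K) * rhoS S j p ≤ wordLen g (dword j p) ∧
        wordLen g (dword j p) ≤ K * rhoS S j p :=
  stmt7_general d ε hε g hg S hS
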